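/- Let d be an odd positive integer and a, b positive real numbers with a + b = d. Set λ₀ = √a + i√b and τ₀ = (λ₀² − d²)/(4d²), which lies in the upper half-plane. Then for all z ∈ ℂ: θ(d·λ̄₀·z, −d²·τ̄₀) = (λ₀/d) · e^{4iπ d² z²} · θ(λ₀ z, τ₀), where λ̄₀ and τ̄₀ denote complex conjugates (note −d²τ̄₀ lies in the upper half-plane). -/

import Mathlib

/-!
Put `Λ = λ₀ / d`. Since `λ₀ λ̄₀ = a + b = d`, one has `4τ₀ + 1 = Λ²`, `dλ̄₀z = λ₀z / Λ²` and
`−d²τ̄₀ = τ₀ / Λ² + (d² − 1)/4`, where `(d² − 1)/4` is even because `d` is odd. The claim is thus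
the transformation law of `θ` under `τ ↦ τ / (4τ + 1)`, i.e. under `S T⁻⁴ S`: apply the inversion
`θ(z, τ) ↝ θ(z/τ, −1/τ)` twice around the period shift by `4`. The two square-root factors combine
into the principal root of `4τ + 1` since each has argument in `(−π/4, π/4)`, and that root of `Λ²`
is `Λ` because `Re Λ > 0`.
-/

/-- The Jacobi theta function `θ(z, τ) = ∑_{m ∈ ℤ} exp(iπm²τ) exp(2iπmz)`. -/
noncomputable def theta (z τ : ℂ) : ℂ :=
  ∑' m : ℤ, Complex.exp ((Real.pi : ℂ) * Complex.I * (m : ℂ) ^ 2 * τ) *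
    Complex.exp (2 * (Real.pi : ℂ) * Complex.I * (m : ℂ) * z)

open Complex Real

lemma theta_eq_jacobiTheta₂ (z τ : ℂ) : theta z τ = jacobiTheta₂ z τ :=
  tsum_congr fun m => by rw [jacobiTheta₂_term, ← Complex.exp_add]; ring_nf

lemma jacobiTheta₂_add_two_mul_nat (z τ : ℂ) (n : ℕ) :
    jacobiTheta₂ z (τ + 2 * n) = jacobiTheta₂ z τ := by
  induction n with
  | zero => simp
  | succ n ih => rw [Nat.cast_succ, mul_add_one, ← add_assoc, jacobiTheta₂_add_right, ih]

lemma Odd.exists_sq_eq_eight_mul_add_one {d : ℕ} (hd : Odd d) : ∃ n, d ^ 2 = 8 * n + 1 := by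
  obtain ⟨r, rfl⟩ := hd
  obtain ⟨n, hn⟩ := Nat.even_mul_succ_self r
  exact ⟨n, by linear_combination 4 * hn⟩

lemma Complex.mul_cpow_of_re_pos {x y : ℂ} (hx : 0 < x.re) (hy : 0 < y.re) (r : ℂ) :
    (x * y) ^ r = x ^ r * y ^ r := by
  have hx₀ : x ≠ 0 := fun h => by simp [h] at hx
  have hy₀ : y ≠ 0 := fun h => by simp [h] at hy
  have harg : arg x + arg y ∈ Set.Ioc (-π) π := by
    have h₁ := abs_arg_lt_pi_div_two_iff.mpr (Or.inl hx)
    have h₂ := abs_arg_lt_pi_div_two_iff.mpr (Or.inl hy)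
    rw [abs_lt] at h₁ h₂
    constructor <;> linarith
  rw [cpow_def_of_ne_zero (mul_ne_zero hx₀ hy₀), cpow_def_of_ne_zero hx₀, cpow_def_of_ne_zero hy₀,
    log_mul hx₀ hy₀ harg, add_mul, exp_add]

lemma im_div_four_mul_add_one (τ : ℂ) : (τ / (4 * τ + 1)).im = τ.im / normSq (4 * τ + 1) := by
  simp only [div_im, add_re, add_im, mul_re, mul_im, one_re, one_im]
  norm_num
  ring

lemma jacobiTheta₂_div_four_mul_add_one_of_im_pos (z : ℂ) {τ : ℂ} (hτ : 0 < τ.im) :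
    jacobiTheta₂ (z / (4 * τ + 1)) (τ / (4 * τ + 1)) =
      (4 * τ + 1) ^ (2⁻¹ : ℂ) * cexp (4 * π * I * z ^ 2 / (4 * τ + 1)) * jacobiTheta₂ z τ := by
  have hτ₀ : τ ≠ 0 := fun h => by simp [h] at hτ
  have hτ₁ : 4 * τ + 1 ≠ 0 := fun h => by simpa [hτ.ne'] using congrArg im h
  set t := -(4 * τ + 1) / τ with ht
  have ht₀ : t ≠ 0 := div_ne_zero (neg_ne_zero.mpr hτ₁) hτ₀
  have hshift : -1 / τ = t + 2 * (2 : ℕ) := by rw [ht]; field_simp; ring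
  have hsqrt : (-I * τ) ^ (1 / 2 : ℂ) * (-I * t) ^ (1 / 2 : ℂ) = (4 * τ + 1) ^ (2⁻¹ : ℂ) := by
    have hre : (-I * t).re = τ.im / normSq τ := by rw [ht]; simp [div_re, div_im]; ring
    rw [← mul_cpow_of_re_pos (by simpa using hτ) (hre ▸ div_pos hτ (normSq_pos.mpr hτ₀)), one_div]
    congr 1
    rw [ht]; field_simp; linear_combination (-(4 * τ + 1)) * I_sq
  have hinv :
      (4 * τ + 1) ^ (2⁻¹ : ℂ) * (1 / (-I * τ) ^ (1 / 2 : ℂ) * (1 / (-I * t) ^ (1 / 2 : ℂ))) = 1 := by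
    have hA : (-I * τ) ^ (1 / 2 : ℂ) ≠ 0 := by simp [cpow_def_of_ne_zero, hτ₀]
    have hB : (-I * t) ^ (1 / 2 : ℂ) ≠ 0 := by simp [cpow_def_of_ne_zero, ht₀]
    rw [← hsqrt]; field_simp
  have hexp : cexp (4 * π * I * z ^ 2 / (4 * τ + 1)) * cexp (-π * I * z ^ 2 / τ) *
      cexp (-π * I * (z / τ) ^ 2 / t) = 1 := by
    rw [← Complex.exp_add, ← Complex.exp_add]
    convert Complex.exp_zero using 2
    rw [ht]; field_simp; ring
  have hz : z / τ / t = -(z / (4 * τ + 1)) := by rw [ht]; field_simp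
  have hτ' : -1 / t = τ / (4 * τ + 1) := by rw [ht]; field_simp
  rw [jacobiTheta₂_functional_equation z τ, hshift, jacobiTheta₂_add_two_mul_nat,
    jacobiTheta₂_functional_equation _ t, hz, hτ', jacobiTheta₂_neg_left]
  linear_combination (-(jacobiTheta₂ (z / (4 * τ + 1)) (τ / (4 * τ + 1)))) * (hexp +
    cexp (4 * π * I * z ^ 2 / (4 * τ + 1)) * cexp (-π * I * z ^ 2 / τ) *
      cexp (-π * I * (z / τ) ^ 2 / t) * hinv)

lemma jacobiTheta₂_div_four_mul_add_one (z τ : ℂ) :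
    jacobiTheta₂ (z / (4 * τ + 1)) (τ / (4 * τ + 1)) =
      (4 * τ + 1) ^ (2⁻¹ : ℂ) * cexp (4 * π * I * z ^ 2 / (4 * τ + 1)) * jacobiTheta₂ z τ := by
  rcases le_or_gt τ.im 0 with hτ | hτ
  · have hτ' : (τ / (4 * τ + 1)).im ≤ 0 := by
      rw [im_div_four_mul_add_one]; exact div_nonpos_of_nonpos_of_nonneg hτ (normSq_nonneg _)
    rw [jacobiTheta₂_undef _ hτ, jacobiTheta₂_undef _ hτ', mul_zero]
  · exact jacobiTheta₂_div_four_mul_add_one_of_im_pos z hτ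

theorem theta_conjugate_transformation_general (d : ℕ) (hd : Odd d)
    (a b : ℝ) (ha : 0 < a) (hb : 0 < b) (hab : a + b = d)
    (l0 t0 : ℂ)
    (hl0 : l0 = (Real.sqrt a : ℂ) + Complex.I * Real.sqrt b)
    (ht0 : t0 = (l0 ^ 2 - (d : ℂ) ^ 2) / (4 * (d : ℂ) ^ 2))
    (z : ℂ) :
    theta ((d : ℂ) * (starRingEnd ℂ) l0 * z) (-(d : ℂ) ^ 2 * (starRingEnd ℂ) t0) =
      l0 / d * Complex.exp (4 * (Real.pi : ℂ) * Complex.I * (d : ℂ) ^ 2 * z ^ 2) *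
        theta (l0 * z) t0 := by
  obtain ⟨n, hn⟩ := hd.exists_sq_eq_eight_mul_add_one
  have hd₀ : (d : ℂ) ≠ 0 := Nat.cast_ne_zero.mpr hd.pos.ne'
  have hre : 0 < (l0 / d).re := by
    rw [hl0, ← ofReal_natCast, div_ofReal_re]
    simpa using div_pos (Real.sqrt_pos.mpr ha) (by exact_mod_cast hd.pos)
  have hl0₀ : l0 ≠ 0 := fun h => by simp [h] at hre
  have hconj : starRingEnd ℂ l0 = d / l0 := by
    rw [eq_div_iff hl0₀, mul_comm, mul_conj, normSq_apply, hl0]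
    simp [← sq, Real.sq_sqrt ha.le, Real.sq_sqrt hb.le]
    exact_mod_cast hab
  have hτ : 4 * t0 + 1 = (l0 / d) ^ 2 := by rw [ht0]; field_simp; ring
  have hz : d * starRingEnd ℂ l0 * z = l0 * z / (4 * t0 + 1) := by
    rw [hτ, hconj]; field_simp
  have hshift : -d ^ 2 * starRingEnd ℂ t0 = t0 / (4 * t0 + 1) + 2 * n := by
    have hnC : (d : ℂ) ^ 2 = 8 * n + 1 := by exact_mod_cast hn
    rw [hτ, ht0, map_div₀]
    simp only [map_sub, map_pow, map_mul, map_ofNat, Complex.conj_natCast, hconj]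
    field_simp
    linear_combination l0 ^ 2 * hnC
  rw [theta_eq_jacobiTheta₂, theta_eq_jacobiTheta₂, hz, hshift, jacobiTheta₂_add_two_mul_nat,
    jacobiTheta₂_div_four_mul_add_one, hτ, sq_cpow_two_inv hre]
  congr 3
  field_simp

/-- Corollary 2.7: with `λ₀ = √a + i√b` and `τ₀ = (λ₀² − d²)/(4d²)`, one has
`θ(dλ̄₀z, −d²τ̄₀) = (λ₀/d) e^{4iπd²z²} θ(λ₀z, τ₀)` for all `z ∈ ℂ`. -/
theorem theta_conjugate_transformation (d : ℕ) (hd : Odd d) (hd0 : 0 < d)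
    (a b : ℝ) (ha : 0 < a) (hb : 0 < b) (hab : a + b = d)
    (l0 t0 : ℂ)
    (hl0 : l0 = (Real.sqrt a : ℂ) + Complex.I * Real.sqrt b)
    (ht0 : t0 = (l0 ^ 2 - (d : ℂ) ^ 2) / (4 * (d : ℂ) ^ 2))
    (z : ℂ) :
    theta ((d : ℂ) * (starRingEnd ℂ) l0 * z) (-(d : ℂ) ^ 2 * (starRingEnd ℂ) t0) =
      l0 / d * Complex.exp (4 * (Real.pi : ℂ) * Complex.I * (d : ℂ) ^ 2 * z ^ 2) *
        theta (l0 * z) t0 :=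
  theta_conjugate_transformation_general d hd a b ha hb hab l0 t0 hl0 ht0 z
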